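/- Let w be Mallows distributed on S_n with parameter 0 < q <= 1. Then for any i in [n], P(|w(i) - i| > 1) <= 2 q^2 (the paper states the slightly weaker intermediate bound sum_{|j-i|>=2} q^{|j-i|}(1-q)/(1-q^n) <= 2q^2 via the pointwise bound P(w(i)=j) <= q^{|i-j|}(1-q)/(1-q^n)). -/

import Mathlib

/-- Number of inversions of a permutation of `Fin n`. -/
def invCount (n : ℕ) (w : Equiv.Perm (Fin n)) : ℕ :=
  (Finset.univ.filter (fun p : Fin n × Fin n => p.1 < p.2 ∧ w p.2 < w p.1)).card

/-- The q-factorial `[m]_q! = ∏_{i=1}^m (1 + q + ⋯ + q^{i-1})`. -/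
noncomputable def qFactorial (q : ℝ) (m : ℕ) : ℝ :=
  ∏ i ∈ Finset.Icc 1 m, (∑ j ∈ Finset.range i, q ^ j)

/-- The Mallows probability of `w`: `q^{l(w)} / [n]_q!`. -/
noncomputable def mallows (q : ℝ) (n : ℕ) (w : Equiv.Perm (Fin n)) : ℝ :=
  q ^ invCount n w / qFactorial q n

/-- Number of descents of a permutation of `Fin n`: positions `i` (0-based) with a
successor `j = i+1` such that `w j < w i`. -/
def desCount (n : ℕ) (w : Equiv.Perm (Fin n)) : ℕ :=
  (Finset.univ.filter
    (fun p : Fin n × Fin n => (p.2 : ℕ) = (p.1 : ℕ) + 1 ∧ w p.2 < w p.1)).card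

/-! Write `W(i, j) = ∑_{w(i) = j} q^{l(w)}`. Right multiplication by the adjacent transposition
`(i i+1)` changes `l` by at most one, so `q W(i, j) ≤ W(i+1, j)`; iterating up to the last
position, `q^{n-1-i} W(i, j) ≤ W(n-1, j)`. A permutation with `w(n-1) = j` is a permutation of
`n - 1` letters with the value `j` inserted at the end, which creates at least `n - 1 - j` new
inversions, so `W(n-1, j) ≤ q^{n-1-j} [n-1]_q!`. Hence `W(i, j) ≤ q^{i-j} [n-1]_q!` for `j ≤ i`,
and by `w ↦ w⁻¹` also `W(i, j) ≤ q^{j-i} [n-1]_q!` for `j > i`. Each distance `d ≥ 2` from `i`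
is attained at most twice, so the sum is at most `2 q^2 [n]_q [n-1]_q! = 2 q^2 [n]_q!`. -/

open Finset Equiv

lemma invCount_inv (n : ℕ) (w : Perm (Fin n)) : invCount n w⁻¹ = invCount n w := by
  unfold invCount
  refine card_nbij' (fun p => (w⁻¹ p.2, w⁻¹ p.1)) (fun p => (w p.2, w p.1)) ?_ ?_ ?_ ?_ <;>
    intro p hp <;> simp_all

lemma swap_castSucc_succ_lt_swap {n : ℕ} {a : Fin n} {x y : Fin (n + 1)} (hxy : x < y)
    (hne : (x, y) ≠ (a.castSucc, a.succ)) :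
    swap a.castSucc a.succ x < swap a.castSucc a.succ y := by
  have := Fin.val_succ a
  have := Fin.val_castSucc a
  simp only [ne_eq, Prod.mk.injEq, Fin.ext_iff] at hne
  simp only [Fin.lt_def, swap_apply_def, Fin.ext_iff] at hxy ⊢
  split_ifs <;> omega

lemma invCount_mul_swap_le {n : ℕ} (w : Perm (Fin (n + 1))) (a : Fin n) :
    invCount (n + 1) (w * swap a.castSucc a.succ) ≤ invCount (n + 1) w + 1 := by
  set s := swap a.castSucc a.succ
  set T := univ.filter fun p : Fin (n + 1) × Fin (n + 1) =>
    p.1 < p.2 ∧ (w * s) p.2 < (w * s) p.1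
  have : (T.erase (a.castSucc, a.succ)).card ≤ invCount (n + 1) w := by
    refine card_le_card_of_injOn (fun p => (s p.1, s p.2)) ?_ ?_
    · rintro ⟨x, y⟩ hp
      simp only [T, mem_coe, mem_erase, mem_filter, mem_univ, true_and] at hp
      simp only [mem_coe, mem_filter, mem_univ, true_and]
      exact ⟨swap_castSucc_succ_lt_swap hp.2.1 hp.1, hp.2.2⟩
    · rintro p - p' - h
      simp only [Prod.mk.injEq, s.injective.eq_iff] at h
      exact Prod.ext h.1 h.2
  have := pred_card_le_card_erase (s := T) (a := (a.castSucc, a.succ))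
  change T.card ≤ _
  omega

def insertLast {n : ℕ} (e : Perm (Fin n)) (j : Fin (n + 1)) : Perm (Fin (n + 1)) :=
  finSuccEquivLast.trans ((optionCongr e).trans (finSuccEquiv' j).symm)

@[simp] lemma insertLast_last {n : ℕ} (e : Perm (Fin n)) (j : Fin (n + 1)) :
    insertLast e j (Fin.last n) = j := by
  simp [insertLast]

@[simp] lemma insertLast_castSucc {n : ℕ} (e : Perm (Fin n)) (j : Fin (n + 1)) (k : Fin n) :
    insertLast e j k.castSucc = j.succAbove (e k) := by
  simp [insertLast]

lemma le_invCount_insertLast {n : ℕ} (e : Perm (Fin n)) (j : Fin (n + 1)) :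
    invCount n e + (n - j) ≤ invCount (n + 1) (insertLast e j) := by
  set w := insertLast e j
  set A := (univ.filter fun p : Fin n × Fin n => p.1 < p.2 ∧ e p.2 < e p.1).map
    (Fin.castSuccEmb.prodMap Fin.castSuccEmb)
  set B := (univ.filter fun x => j < w x).map
    ⟨fun x => (x, Fin.last n), fun x y h => congr_arg Prod.fst h⟩
  have hA : A.card = invCount n e := card_map _
  have hB : B.card = n - j := by
    rw [card_map, card_equiv w (t := Ioi j) (by simp), Fin.card_Ioi]
    omega
  have hAB : Disjoint A B := by
    simp only [A, B, disjoint_left, mem_map, mem_filter, mem_univ, true_and]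
    rintro _ ⟨⟨x, y⟩, -, rfl⟩ ⟨z, -, h⟩
    exact (Fin.castSucc_lt_last y).ne' congr(Prod.snd $h)
  have hsub : A ∪ B ⊆ univ.filter fun p => p.1 < p.2 ∧ w p.2 < w p.1 := by
    refine union_subset (fun p hp => ?_) (fun p hp => ?_) <;>
      simp only [A, B, mem_map, mem_filter, mem_univ, true_and] at hp ⊢
    · obtain ⟨⟨x, y⟩, hxy, rfl⟩ := hp
      simpa [w] using hxy
    · obtain ⟨x, hx, rfl⟩ := hp
      show x < Fin.last n ∧ w (Fin.last n) < w x
      refine ⟨Fin.lt_last_iff_ne_last.2 ?_, by simpa [w] using hx⟩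
      rintro rfl
      simp [w] at hx
  calc invCount n e + (n - j) = (A ∪ B).card := by rw [card_union_of_disjoint hAB, hA, hB]
    _ ≤ invCount (n + 1) w := card_le_card hsub

lemma insertLast_injective (n : ℕ) :
    Function.Injective fun p : Perm (Fin n) × Fin (n + 1) => insertLast p.1 p.2 := by
  rintro ⟨e, j⟩ ⟨e', j'⟩ h
  have hj : j = j' := by simpa using congr($h (Fin.last n))
  subst hj
  refine Prod.ext (Equiv.ext fun k => ?_) rfl
  simpa using congr($h k.castSucc)

lemma insertLast_bijective (n : ℕ) :
    Function.Bijective fun p : Perm (Fin n) × Fin (n + 1) => insertLast p.1 p.2 := by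
  refine (Fintype.bijective_iff_injective_and_card _).2 ⟨insertLast_injective n, ?_⟩
  simp [Fintype.card_perm, Nat.factorial_succ, mul_comm]

lemma sum_filter_apply_last_eq (n : ℕ) (j : Fin (n + 1)) {M : Type*} [AddCommMonoid M]
    (f : Perm (Fin (n + 1)) → M) :
    ∑ w with w (Fin.last n) = j, f w = ∑ e, f (insertLast e j) := by
  refine (sum_nbij (fun e => insertLast e j) ?_ ?_ ?_ fun _ _ => rfl).symm
  · simp
  · exact fun e _ e' _ h => congr_arg Prod.fst (@insertLast_injective n (e, j) (e', j) h)
  · intro w hw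
    obtain ⟨⟨e, j'⟩, rfl⟩ := (insertLast_bijective n).2 w
    simp_all

lemma qFactorial_succ (q : ℝ) (m : ℕ) :
    qFactorial q (m + 1) = qFactorial q m * ∑ t ∈ range (m + 1), q ^ t := by
  rw [qFactorial, qFactorial, prod_Icc_succ_top (by omega)]

lemma qFactorial_pos {q : ℝ} (hq : 0 < q) (m : ℕ) : 0 < qFactorial q m :=
  prod_pos fun i hi => sum_pos (fun t _ => pow_pos hq t)
    (nonempty_range_iff.2 (by rw [mem_Icc] at hi; omega))

lemma sum_pow_sub_eq_sum_range {R : Type*} [CommSemiring R] (q : R) (m : ℕ) :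
    ∑ j : Fin (m + 1), q ^ (m - j) = ∑ t ∈ range (m + 1), q ^ t :=
  (Fin.sum_univ_eq_sum_range (fun j => q ^ (m - j)) _).trans
    (sum_range_reflect (fun t => q ^ t) (m + 1))

def weightMapsTo (q : ℝ) (n : ℕ) (i j : Fin n) : ℝ :=
  ∑ w with w i = j, q ^ invCount n w

lemma sum_filter_apply_eq_sum_weightMapsTo (q : ℝ) {n : ℕ} (p : Fin n → Prop)
    [DecidablePred p] (i : Fin n) :
    ∑ w with p (w i), q ^ invCount n w = ∑ j with p j, weightMapsTo q n i j := by
  rw [← sum_fiberwise_of_maps_to (g := fun w : Perm (Fin n) => w i) (t := univ.filter p)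
    (by simp)]
  refine sum_congr rfl fun j hj => ?_
  rw [weightMapsTo, filter_filter]
  refine sum_congr (filter_congr fun w _ => ?_) fun _ _ => rfl
  simp only [mem_filter, mem_univ, true_and] at hj
  exact ⟨And.right, fun h => ⟨h ▸ hj, h⟩⟩

section
variable {q : ℝ}

lemma weightMapsTo_comm (n : ℕ) (i j : Fin n) :
    weightMapsTo q n i j = weightMapsTo q n j i := by
  refine sum_equiv (Equiv.inv _) (fun w => ?_) (fun w _ => by simp [invCount_inv])
  simp [Equiv.eq_symm_apply, eq_comm]

lemma mul_weightMapsTo_castSucc_le (hq0 : 0 ≤ q) (hq1 : q ≤ 1) {m : ℕ} (i : Fin m)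
    (j : Fin (m + 1)) :
    q * weightMapsTo q (m + 1) i.castSucc j ≤ weightMapsTo q (m + 1) i.succ j := by
  set s := swap i.castSucc i.succ
  have hshift : weightMapsTo q (m + 1) i.succ j =
      ∑ w with w i.castSucc = j, q ^ invCount (m + 1) (w * s) :=
    (sum_equiv (Equiv.mulRight s) (fun w => by simp [s]) (fun w _ => rfl)).symm
  rw [hshift, weightMapsTo, mul_sum]
  refine sum_le_sum fun w _ => ?_
  rw [← pow_succ']
  exact pow_le_pow_of_le_one hq0 hq1 (invCount_mul_swap_le w i)

lemma weightMapsTo_last_le (hq0 : 0 ≤ q) (hq1 : q ≤ 1) {m : ℕ} (j : Fin (m + 1)) :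
    weightMapsTo q (m + 1) (Fin.last m) j ≤
      q ^ (m - j) * ∑ e : Perm (Fin m), q ^ invCount m e := by
  rw [weightMapsTo, sum_filter_apply_last_eq, mul_sum]
  refine sum_le_sum fun e _ => ?_
  rw [← pow_add]
  exact pow_le_pow_of_le_one hq0 hq1 (by linarith [le_invCount_insertLast e j])

lemma sum_pow_invCount_le_qFactorial (hq0 : 0 ≤ q) (hq1 : q ≤ 1) (m : ℕ) :
    ∑ w : Perm (Fin m), q ^ invCount m w ≤ qFactorial q m := by
  induction m with
  | zero => simp [invCount, qFactorial]
  | succ m ih =>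
    calc ∑ w : Perm (Fin (m + 1)), q ^ invCount (m + 1) w
        = ∑ j, weightMapsTo q (m + 1) (Fin.last m) j := (sum_fiberwise _ _ _).symm
      _ ≤ ∑ j : Fin (m + 1), q ^ (m - j) * ∑ e : Perm (Fin m), q ^ invCount m e :=
        sum_le_sum fun j _ => weightMapsTo_last_le hq0 hq1 j
      _ ≤ ∑ j : Fin (m + 1), q ^ (m - j) * qFactorial q m :=
        sum_le_sum fun j _ => mul_le_mul_of_nonneg_left ih (by positivity)
      _ = qFactorial q (m + 1) := by
        rw [← sum_mul, sum_pow_sub_eq_sum_range, qFactorial_succ, mul_comm]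

lemma pow_mul_weightMapsTo_le_last (hq0 : 0 ≤ q) (hq1 : q ≤ 1) {m : ℕ} (i j : Fin (m + 1)) :
    q ^ (m - i) * weightMapsTo q (m + 1) i j ≤ weightMapsTo q (m + 1) (Fin.last m) j := by
  induction i using Fin.reverseInduction with
  | last => simp
  | cast i ih =>
    have hexp : m - i.castSucc = m - i.succ + 1 := by
      rw [Fin.val_castSucc, Fin.val_succ]
      omega
    calc q ^ (m - i.castSucc) * weightMapsTo q (m + 1) i.castSucc j
        = q ^ (m - i.succ) * (q * weightMapsTo q (m + 1) i.castSucc j) := by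
          rw [hexp, pow_succ, mul_assoc]
      _ ≤ q ^ (m - i.succ) * weightMapsTo q (m + 1) i.succ j := by
          gcongr
          exact mul_weightMapsTo_castSucc_le hq0 hq1 i j
      _ ≤ _ := ih

lemma weightMapsTo_le_of_le (hq0 : 0 < q) (hq1 : q ≤ 1) {m : ℕ} {i j : Fin (m + 1)}
    (hji : j ≤ i) :
    weightMapsTo q (m + 1) i j ≤ q ^ (i - j : ℕ) * qFactorial q m := by
  have hexp : m - j = (m - i) + (i - j : ℕ) := by
    have := i.is_le
    rw [Fin.le_def] at hji
    omega
  refine le_of_mul_le_mul_left ?_ (pow_pos hq0 (m - i))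
  calc q ^ (m - i) * weightMapsTo q (m + 1) i j
      ≤ weightMapsTo q (m + 1) (Fin.last m) j := pow_mul_weightMapsTo_le_last hq0.le hq1 i j
    _ ≤ q ^ (m - j) * ∑ e : Perm (Fin m), q ^ invCount m e := weightMapsTo_last_le hq0.le hq1 j
    _ ≤ q ^ (m - j) * qFactorial q m := by
        gcongr
        exact sum_pow_invCount_le_qFactorial hq0.le hq1 m
    _ = q ^ (m - i) * (q ^ (i - j : ℕ) * qFactorial q m) := by rw [hexp, pow_add, mul_assoc]

lemma weightMapsTo_le (hq0 : 0 < q) (hq1 : q ≤ 1) {m : ℕ} (i j : Fin (m + 1)) :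
    weightMapsTo q (m + 1) i j ≤ q ^ ((j : ℤ) - i).natAbs * qFactorial q m := by
  rcases le_total j i with hji | hij
  · convert weightMapsTo_le_of_le hq0 hq1 hji using 3
    rw [Fin.le_def] at hji
    omega
  · rw [weightMapsTo_comm]
    convert weightMapsTo_le_of_le hq0 hq1 hij using 3
    rw [Fin.le_def] at hij
    omega

end

lemma sum_pow_natAbs_sub_le {q : ℝ} (hq : 0 ≤ q) {m : ℕ} (i : Fin (m + 1)) :
    ∑ j ∈ univ.filter fun j : Fin (m + 1) => 1 < |((j : ℕ) : ℤ) - i|,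
        q ^ ((j : ℤ) - i).natAbs ≤ 2 * q ^ 2 * ∑ t ∈ range (m + 1), q ^ t := by
  set s := univ.filter fun j : Fin (m + 1) => 1 < |((j : ℕ) : ℤ) - i|
  -- an index at distance `≥ 2` from `i` is determined by its side of `i` and its distance
  set g : Fin (m + 1) → Bool × ℕ := fun j => (decide (j < i), ((j : ℤ) - i).natAbs - 2)
  have hfar : ∀ j ∈ s, 2 ≤ ((j : ℤ) - i).natAbs := fun j hj => by
    simp only [s, mem_filter, mem_univ, true_and, Int.abs_eq_natAbs] at hj
    omega
  have hinj : Set.InjOn g s := fun j hj j' hj' h => by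
    have := hfar j hj
    have := hfar j' hj'
    simp only [g, Prod.mk.injEq, decide_eq_decide, Fin.lt_def] at h
    ext
    omega
  have himage : s.image g ⊆ univ ×ˢ range (m + 1) := fun p hp => by
    obtain ⟨j, -, rfl⟩ := mem_image.1 hp
    simp only [g, mem_product, mem_univ, mem_range, true_and]
    omega
  calc ∑ j ∈ s, q ^ ((j : ℤ) - i).natAbs = q ^ 2 * ∑ p ∈ s.image g, q ^ p.2 := by
        rw [sum_image hinj, mul_sum]
        refine sum_congr rfl fun j hj => ?_
        rw [← pow_add, Nat.add_sub_cancel' (hfar j hj)]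
    _ ≤ q ^ 2 * ∑ p ∈ univ ×ˢ range (m + 1), q ^ p.2 :=
        mul_le_mul_of_nonneg_left
          (sum_le_sum_of_subset_of_nonneg himage fun _ _ _ => by positivity) (by positivity)
    _ = 2 * q ^ 2 * ∑ t ∈ range (m + 1), q ^ t := by
        rw [sum_product, Fintype.sum_bool]
        ring

/-- For `w` Mallows distributed on `S_n` with parameter `0 < q ≤ 1` and any
index `i`, `P(|w(i) - i| > 1) ≤ 2 q²`. -/
theorem stmt_17 (n : ℕ) (q : ℝ) (hq0 : 0 < q) (hq1 : q ≤ 1) (i : Fin n) :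
    ∑ w ∈ Finset.univ.filter
        (fun w : Equiv.Perm (Fin n) => 1 < |((w i : ℕ) : ℤ) - ((i : ℕ) : ℤ)|),
      mallows q n w ≤ 2 * q ^ 2 := by
  obtain ⟨m, rfl⟩ : ∃ m, n = m + 1 := Nat.exists_eq_add_one_of_ne_zero i.pos.ne'
  simp only [mallows, ← sum_div]
  rw [div_le_iff₀ (qFactorial_pos hq0 _),
    sum_filter_apply_eq_sum_weightMapsTo q fun j : Fin (m + 1) => 1 < |((j : ℕ) : ℤ) - i|]
  calc _ ≤ ∑ j ∈ univ.filter fun j : Fin (m + 1) => 1 < |((j : ℕ) : ℤ) - i|,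
          q ^ ((j : ℤ) - i).natAbs * qFactorial q m :=
        sum_le_sum fun j _ => weightMapsTo_le hq0 hq1 i j
    _ ≤ 2 * q ^ 2 * (∑ t ∈ range (m + 1), q ^ t) * qFactorial q m := by
        rw [← sum_mul]
        exact mul_le_mul_of_nonneg_right (sum_pow_natAbs_sub_le hq0.le i)
          (qFactorial_pos hq0 m).le
    _ = 2 * q ^ 2 * qFactorial q (m + 1) := by rw [qFactorial_succ]; ring
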